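/- Let H1 = (V1, 𝓔1) and H2 = (V2, 𝓔2) be finite hypergraphs. If H1 and H2 are isomorphic, then for every iteration t ≥ 0 the multisets of 1-GWL vertex labels coincide, i.e. {{ l^t_{H1,i} : i ∈ V1 }} = {{ l^t_{H2,i} : i ∈ V2 }}. Equivalently (Proposition 1): if there exists t ≥ 0 such that {{ l^t_{H1,i} : i ∈ V1 }} ≠ {{ l^t_{H2,i} : i ∈ V2 }} (the 1-GWL test distinguishes H1 and H2), then H1 and H2 are not isomorphic. -/

import Mathlib

/-- A finite hypergraph on a vertex type `V`: a finite set of nonempty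
finite hyperedges. -/
structure GWLHypergraph (V : Type) [DecidableEq V] where
  edges : Finset (Finset V)
  edges_nonempty : ∀ e ∈ edges, e.Nonempty

namespace GWLHypergraph

variable {V : Type} [DecidableEq V]

/-- The incident hyperedges `E_i` of a vertex `i`. -/
def incident (H : GWLHypergraph V) (i : V) : Finset (Finset V) :=
  H.edges.filter (fun e => i ∈ e)

end GWLHypergraph

/-- The type of 1-GWL labels at iteration `t`. -/
def LabelType : ℕ → Type
  | 0 => ℕ
  | t + 1 => Multiset (LabelType t × Multiset (LabelType t))

/-- The 1-GWL vertex label `l^t_{H,i}`: all vertices start with label `0`, and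
`l^{t+1}_i = {{ (l^t_i, l^t_e) : e ∈ E_i }}` where `l^t_e = {{ l^t_j : j ∈ e }}`. -/
def gwlLabel {V : Type} [DecidableEq V] (H : GWLHypergraph V) : (t : ℕ) → V → LabelType t
  | 0, _ => (0 : ℕ)
  | t + 1, i =>
      ((H.incident i).val.map fun e => (gwlLabel H t i, e.val.map (gwlLabel H t)))

/-- The 1-GWL hyperedge label `l^t_e = {{ l^t_j : j ∈ e }}`. -/
def gwlEdgeLabel {V : Type} [DecidableEq V] (H : GWLHypergraph V) (t : ℕ) (e : Finset V) :
    Multiset (LabelType t) :=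
  e.val.map (gwlLabel H t)

/-- The multiset of 1-GWL labels of all vertices, `{{ l^t_{H,i} : i ∈ V }}`. -/
def gwlMultiset {V : Type} [DecidableEq V] [Fintype V] (H : GWLHypergraph V) (t : ℕ) :
    Multiset (LabelType t) :=
  (Finset.univ : Finset V).val.map (gwlLabel H t)

/-- The UniGNN feature `h^t_{H,i}` computed by two-stage message passing with
first-stage aggregations `φ1`, second-stage aggregations `φ2` and constant initial
feature `c`:  `h^{t+1}_i = φ2 t (h^t_i) {{ φ1 t {{ h^t_j : j ∈ e }} : e ∈ E_i }}`. -/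
def uniFeat {V : Type} [DecidableEq V] {X : Type}
    (φ1 : ℕ → Multiset X → X) (φ2 : ℕ → X → Multiset X → X) (c : X)
    (H : GWLHypergraph V) : (t : ℕ) → V → X
  | 0, _ => c
  | t + 1, i =>
      φ2 t (uniFeat φ1 φ2 c H t i)
        ((H.incident i).val.map fun e => φ1 t (e.val.map (uniFeat φ1 φ2 c H t)))

/-- The multiset of UniGNN features of all vertices, `{{ h^t_{H,i} : i ∈ V }}`. -/
def uniFeatMultiset {V : Type} [DecidableEq V] [Fintype V] {X : Type}
    (φ1 : ℕ → Multiset X → X) (φ2 : ℕ → X → Multiset X → X) (c : X)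
    (H : GWLHypergraph V) (t : ℕ) : Multiset X :=
  (Finset.univ : Finset V).val.map (uniFeat φ1 φ2 c H t)

/-- `f` is an isomorphism between hypergraphs `H1` and `H2`. -/
def IsHypergraphIso {V1 V2 : Type} [DecidableEq V1] [DecidableEq V2]
    (H1 : GWLHypergraph V1) (H2 : GWLHypergraph V2) (f : V1 ≃ V2) : Prop :=
  ∀ e : Finset V1, e ∈ H1.edges ↔ e.image f ∈ H2.edges

/-! An isomorphism `f` maps the hyperedges incident to `i` bijectively onto those incident to
`f i`, so by induction on `t` it preserves every 1-GWL label; the two label multisets are then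
reindexings of each other along `f`. -/

namespace IsHypergraphIso

variable {V1 V2 : Type} [DecidableEq V1] [DecidableEq V2]
  {H1 : GWLHypergraph V1} {H2 : GWLHypergraph V2} {f : V1 ≃ V2}

theorem incident_apply (hf : IsHypergraphIso H1 H2 f) (i : V1) :
    H2.incident (f i) = (H1.incident i).map f.finsetCongr.toEmbedding := by
  ext e'
  obtain ⟨e, rfl⟩ := f.finsetCongr.surjective e'
  rw [Finset.mem_map_equiv, Equiv.symm_apply_apply]
  simp only [GWLHypergraph.incident, Finset.mem_filter, hf e, Equiv.finsetCongr_apply,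
    Finset.map_eq_image, Equiv.coe_toEmbedding, f.injective.mem_finset_image]

theorem gwlLabel_apply (hf : IsHypergraphIso H1 H2 f) (t : ℕ) (i : V1) :
    gwlLabel H2 t (f i) = gwlLabel H1 t i := by
  induction t generalizing i with
  | zero => rfl
  | succ t ih =>
    simp only [gwlLabel, hf.incident_apply, Finset.map_val, Multiset.map_map]
    refine Multiset.map_congr rfl fun e _ => ?_
    simp only [Function.comp_apply, Equiv.coe_toEmbedding, Equiv.finsetCongr_apply, Finset.map_val,
      Multiset.map_map, ih]

end IsHypergraphIso

/-- **Proposition 1 (1-GWL).** If two finite hypergraphs are isomorphic, then for every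
iteration `t` the multisets of 1-GWL vertex labels coincide; equivalently, if the 1-GWL
test distinguishes them at some iteration, they are not isomorphic. -/
theorem gwl_multiset_eq_of_iso
    {V1 V2 : Type} [DecidableEq V1] [Fintype V1] [DecidableEq V2] [Fintype V2]
    (H1 : GWLHypergraph V1) (H2 : GWLHypergraph V2)
    (hiso : ∃ f : V1 ≃ V2, IsHypergraphIso H1 H2 f) :
    ∀ t : ℕ, gwlMultiset H1 t = gwlMultiset H2 t := by
  obtain ⟨f, hf⟩ := hiso
  intro t
  have huniv : (Finset.univ : Finset V2).val = (Finset.univ : Finset V1).val.map f :=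
    congrArg Finset.val (Finset.univ_map_equiv_to_embedding f).symm
  simp only [gwlMultiset, huniv, Multiset.map_map, Function.comp_def, hf.gwlLabel_apply]
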